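/- arXiv:0907.3103 — 2 statements merged into one kernel-verified Lean document; each statement's English description precedes it below -/
import Mathlib

section
/- Let H be a complex Hilbert space, let A be a norm-closed subalgebra of B(H) (not assumed to contain the identity operator), and let x ∈ A with ‖x‖ ≤ 1. Then x is quasi-invertible in A (i.e. there exists y ∈ A with y x = x + y and x y = x + y) if and only if ‖1 + x‖ < 2, where 1 denotes the identity operator of B(H) and the norm is the operator norm. -/
/-!
If `1 - x` has a left inverse `v`, then `d ‖ξ‖ ≤ ‖(1 - x) ξ‖` for some `d > 0`, and the
parallelogram law together with `‖x ξ‖ ≤ ‖ξ‖` gives `‖(1 + x) ξ‖² ≤ (4 - d²) ‖ξ‖²`.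
Conversely, if `‖1 + x‖ < 2` then `a = (1 + x) / 2` has norm `< 1`, so `1 - x = 2 (1 - a)` is
invertible with inverse `v = ½ ∑ aⁿ`; the quasi-inverse `1 - v = -x v = -½ ∑ x aⁿ` is a limit of
elements of `A`, because `A a ⊆ A` although `a` itself need not lie in `A`.
-/

variable {H : Type*} [NormedAddCommGroup H] [InnerProductSpace ℂ H] [CompleteSpace H]

/-- `A` is a norm-closed (not necessarily unital) subalgebra of `B(H)`, viewed as a set. -/
def IsClosedSubalgebraSet (A : Set (H →L[ℂ] H)) : Prop :=
  IsClosed A ∧ (0 : H →L[ℂ] H) ∈ A ∧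
    (∀ x ∈ A, ∀ y ∈ A, x + y ∈ A) ∧
    (∀ (c : ℂ), ∀ x ∈ A, c • x ∈ A) ∧
    (∀ x ∈ A, ∀ y ∈ A, x * y ∈ A)

section Ring

variable {R : Type*} [Ring R] {x y v : R}

theorem one_sub_mul_one_sub_eq_one_of_mul_eq_add (h : y * x = x + y) :
    (1 - y) * (1 - x) = 1 := by
  rw [sub_mul, one_mul, mul_sub, mul_one, h]
  abel

theorem one_sub_mul_eq_add_of_mul_one_sub_eq_one (h : v * (1 - x) = 1) :
    (1 - v) * x = x + (1 - v) := by
  have hvx : v * x = v - 1 := by rw [← h]; noncomm_ring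
  rw [sub_mul, one_mul, hvx]
  abel

theorem mul_one_sub_eq_add_of_one_sub_mul_eq_one (h : (1 - x) * v = 1) :
    x * (1 - v) = x + (1 - v) := by
  have hxv : x * v = v - 1 := by rw [← h]; noncomm_ring
  rw [mul_sub, mul_one, hxv]
  abel

theorem one_sub_eq_neg_mul_of_one_sub_mul_eq_one (h : (1 - x) * v = 1) :
    1 - v = -(x * v) := by
  rw [← h]
  noncomm_ring

end Ring

theorem mul_pow_mem_of_forall_mul_mem {M : Type*} [Monoid M] {s : Set M} {z a : M} (hz : z ∈ s)
    (ha : ∀ w ∈ s, w * a ∈ s) (n : ℕ) : z * a ^ n ∈ s := by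
  induction n with
  | zero => simpa using hz
  | succ n ih => simpa only [pow_succ, ← mul_assoc] using ha _ ih

theorem ContinuousLinearMap.exists_pos_mul_norm_le_norm_apply_of_comp_eq_id
    {𝕜 E F : Type*} [NontriviallyNormedField 𝕜] [SeminormedAddCommGroup E] [NormedSpace 𝕜 E]
    [SeminormedAddCommGroup F] [NormedSpace 𝕜 F] {u : E →L[𝕜] F} {v : F →L[𝕜] E}
    (h : v ∘L u = ContinuousLinearMap.id 𝕜 E) : ∃ d > 0, ∀ ξ, d * ‖ξ‖ ≤ ‖u ξ‖ := by
  refine ⟨(‖v‖ + 1)⁻¹, by positivity, fun ξ => ?_⟩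
  rw [inv_mul_le_iff₀ (by positivity)]
  calc ‖ξ‖ = ‖v (u ξ)‖ := by rw [← comp_apply, h, id_apply]
    _ ≤ ‖v‖ * ‖u ξ‖ := v.le_opNorm _
    _ ≤ (‖v‖ + 1) * ‖u ξ‖ := by gcongr; linarith

theorem norm_add_sq_add_norm_sub_sq_le (𝕜 : Type*) {E : Type*} [RCLike 𝕜] [NormedAddCommGroup E]
    [InnerProductSpace 𝕜 E] {ξ η : E} (h : ‖η‖ ≤ ‖ξ‖) :
    ‖ξ + η‖ ^ 2 + ‖ξ - η‖ ^ 2 ≤ 4 * ‖ξ‖ ^ 2 := by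
  have := parallelogram_law_with_norm 𝕜 ξ η
  nlinarith [norm_nonneg η]

section InnerProductSpace

variable {𝕜 E : Type*} [RCLike 𝕜] [NormedAddCommGroup E] [InnerProductSpace 𝕜 E]

theorem ContinuousLinearMap.norm_one_add_lt_two_of_mul_norm_le_norm_one_sub_apply
    {T : E →L[𝕜] E} (hT : ‖T‖ ≤ 1) {d : ℝ} (hd : 0 < d) (h : ∀ ξ, d * ‖ξ‖ ≤ ‖(1 - T) ξ‖) :
    ‖1 + T‖ < 2 := by
  have hbound : ∀ ξ, ‖(1 + T) ξ‖ ≤ √(4 - d ^ 2) * ‖ξ‖ := by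
    intro ξ
    rw [← Real.sqrt_sq (norm_nonneg ξ), ← Real.sqrt_mul' _ (sq_nonneg _)]
    apply Real.le_sqrt_of_sq_le
    have hpar := norm_add_sq_add_norm_sub_sq_le 𝕜 (by simpa using T.le_of_opNorm_le hT ξ)
    have hlow := pow_le_pow_left₀ (by positivity) (h ξ) 2
    simp only [add_apply, sub_apply, one_apply_eq_self] at hlow ⊢
    nlinarith
  calc ‖1 + T‖ ≤ √(4 - d ^ 2) := opNorm_le_bound _ (Real.sqrt_nonneg _) hbound
    _ < 2 := by rw [Real.sqrt_lt' two_pos]; nlinarith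

theorem ContinuousLinearMap.norm_one_add_lt_two_of_mul_one_sub_eq_one {T v : E →L[𝕜] E}
    (hT : ‖T‖ ≤ 1) (hv : v * (1 - T) = 1) : ‖1 + T‖ < 2 :=
  let ⟨_, hd, h⟩ := exists_pos_mul_norm_le_norm_apply_of_comp_eq_id hv
  norm_one_add_lt_two_of_mul_norm_le_norm_one_sub_apply hT hd h

end InnerProductSpace

section BanachAlgebra

variable {𝕜 R : Type*} [RCLike 𝕜] [NormedRing R] [NormedAlgebra 𝕜 R] [CompleteSpace R]

theorem NonUnitalSubalgebra.exists_quasiInverse_mem_of_norm_one_add_lt_two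
    (S : NonUnitalSubalgebra 𝕜 R) (hS : IsClosed (S : Set R)) {x : R} (hx : x ∈ S)
    (h : ‖1 + x‖ < 2) : ∃ y ∈ S, y * x = x + y ∧ x * y = x + y := by
  set a : R := (2⁻¹ : 𝕜) • (1 + x)
  have ha : ‖a‖ < 1 := by
    rw [norm_smul, norm_inv, RCLike.norm_two]
    linarith
  have h1a : 1 - a = (2⁻¹ : 𝕜) • (1 - x) := by module
  set v : R := (2⁻¹ : 𝕜) • ∑' n, a ^ n
  have hv : v * (1 - x) = 1 := by
    rw [smul_mul_assoc, ← mul_smul_comm, ← h1a, geom_series_mul_neg a ha]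
  have hv' : (1 - x) * v = 1 := by
    rw [mul_smul_comm, ← smul_mul_assoc, ← h1a, mul_neg_geom_series a ha]
  have hSa : ∀ w ∈ S, w * a ∈ S := fun w hw => by
    rw [mul_smul_comm, mul_add, mul_one]
    exact S.smul_mem _ (S.add_mem hw (S.mul_mem hw hx))
  have hv_mem : 1 - v ∈ S := by
    rw [one_sub_eq_neg_mul_of_one_sub_mul_eq_one hv', mul_smul_comm,
      ← (summable_geometric_of_norm_lt_one ha).tsum_mul_left]
    exact neg_mem (S.smul_mem _ (tsum_mem hS (mul_pow_mem_of_forall_mul_mem hx hSa)))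
  exact ⟨1 - v, hv_mem, one_sub_mul_eq_add_of_mul_one_sub_eq_one hv,
    mul_one_sub_eq_add_of_one_sub_mul_eq_one hv'⟩

end BanachAlgebra

def IsClosedSubalgebraSet.toNonUnitalSubalgebra {A : Set (H →L[ℂ] H)}
    (hA : IsClosedSubalgebraSet A) : NonUnitalSubalgebra ℂ (H →L[ℂ] H) where
  carrier := A
  zero_mem' := hA.2.1
  add_mem' ha hb := hA.2.2.1 _ ha _ hb
  mul_mem' ha hb := hA.2.2.2.2 _ ha _ hb
  smul_mem' c _ hx := hA.2.2.2.1 c _ hx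

/-- For `x` of norm at most one in an operator algebra `A ⊆ B(H)` (not assumed unital),
`x` is quasi-invertible in `A` iff `‖1 + x‖ < 2`, where `1` is the identity of `B(H)`. -/
theorem quasi_invertible_iff_norm_one_add_lt_two
    (A : Set (H →L[ℂ] H)) (hA : IsClosedSubalgebraSet A)
    (x : H →L[ℂ] H) (hxA : x ∈ A) (hx : ‖x‖ ≤ 1) :
    (∃ y ∈ A, y * x = x + y ∧ x * y = x + y) ↔ ‖(1 : H →L[ℂ] H) + x‖ < 2 :=
  ⟨fun ⟨_, _, hyx, _⟩ => ContinuousLinearMap.norm_one_add_lt_two_of_mul_one_sub_eq_one hx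
      (one_sub_mul_one_sub_eq_one_of_mul_eq_add hyx),
    hA.toNonUnitalSubalgebra.exists_quasiInverse_mem_of_norm_one_add_lt_two hA.1 hxA⟩
end

section
/- Let H be a complex Hilbert space and let A be a norm-closed subalgebra of B(H) which is semiprime and has a contractive approximate identity. The following are equivalent: (i) every minimal right ideal of A equals {p a : a ∈ A} for some self-adjoint projection p ∈ A; (ii) for every idempotent e ∈ A with e A e = ℂ e, the orthogonal projection of H onto the range of e belongs to A. -/
open Filter

variable {H : Type*} [NormedAddCommGroup H] [InnerProductSpace ℂ H] [CompleteSpace H]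

/-- `J` is a norm-closed two-sided ideal of the algebra (set) `A`. -/
def IsClosedIdealOf (A J : Set (H →L[ℂ] H)) : Prop :=
  J ⊆ A ∧ IsClosed J ∧ (0 : H →L[ℂ] H) ∈ J ∧
    (∀ x ∈ J, ∀ y ∈ J, x + y ∈ J) ∧
    (∀ (c : ℂ), ∀ x ∈ J, c • x ∈ J) ∧
    (∀ j ∈ J, ∀ a ∈ A, j * a ∈ J ∧ a * j ∈ J)

/-- `J` is a right ideal of the algebra (set) `A` (not necessarily closed). -/
def IsRightIdealOf (A J : Set (H →L[ℂ] H)) : Prop :=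
  J ⊆ A ∧ (0 : H →L[ℂ] H) ∈ J ∧
    (∀ x ∈ J, ∀ y ∈ J, x + y ∈ J) ∧
    (∀ (c : ℂ), ∀ x ∈ J, c • x ∈ J) ∧
    (∀ j ∈ J, ∀ a ∈ A, j * a ∈ J)

/-- `A` has a (two-sided) contractive approximate identity, formalized via a filter. -/
def HasCai (D : Set (H →L[ℂ] H)) : Prop :=
  ∃ (ι : Type) (l : Filter ι) (e : ι → H →L[ℂ] H), l.NeBot ∧
    (∀ i, e i ∈ D) ∧ (∀ i, ‖e i‖ ≤ 1) ∧
    ∀ d ∈ D, Tendsto (fun i => e i * d) l (nhds d) ∧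
      Tendsto (fun i => d * e i) l (nhds d)

/-!
Both conditions concern the right ideals `eA` of algebraically minimal idempotents `e`, and in a
semiprime algebra these are exactly the minimal right ideals. A minimal right ideal `J` is not
square-zero, which produces an idempotent `e` with `J = eA`; every nonzero `x ∈ eAe` then has
`xA = eA`, so `eAe` is a division algebra, equal to `ℂe` by Gelfand–Mazur. Conversely, if
`eAe = ℂe` then every nonzero right ideal inside `eA` contains `e`. Finally, for idempotents
`p, e ∈ A` one has `pA = eA` iff `pe = e` and `ep = p`, i.e. iff `p` is an idempotent with the
same range as `e`; a self-adjoint such `p` is the range projection of `e`.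
-/

section Corner

variable {E : Type*} [NormedAddCommGroup E] [NormedSpace ℂ E] {e : E →L[ℂ] E}

theorem mem_ker_one_sub_iff {v : E} : v ∈ (1 - e).ker ↔ e v = v := by
  rw [LinearMap.mem_ker, ContinuousLinearMap.toLinearMap_sub, LinearMap.sub_apply, sub_eq_zero,
    eq_comm]
  rfl

/-- The corner `e B(E) e` acting on the range of `e`, written `ker (1 - e)` so that it is
visibly closed. -/
def compression (he : IsIdempotentElem e) :
    (E →L[ℂ] E) →ₗ[ℂ] (1 - e).ker →L[ℂ] (1 - e).ker where
  toFun z := ((e * z).comp (1 - e).ker.subtypeL).codRestrict _ fun v => by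
    rw [mem_ker_one_sub_iff, ContinuousLinearMap.comp_apply, ← mul_apply_eq_comp,
      ← mul_assoc, he.eq]
  map_add' z w := by ext v; exact map_add e (z v) (w v)
  map_smul' c z := by ext v; exact map_smul e c (z v)

theorem compression_apply (he : IsIdempotentElem e) (z : E →L[ℂ] E) (v : (1 - e).ker) :
    (compression he z v : E) = e (z v) := rfl

theorem compression_self (he : IsIdempotentElem e) : compression he e = 1 := by
  ext v
  rw [compression_apply, mem_ker_one_sub_iff.mp v.2, mem_ker_one_sub_iff.mp v.2]
  rfl

theorem compression_mul (he : IsIdempotentElem e) {z : E →L[ℂ] E} (hz : z * e = z)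
    (w : E →L[ℂ] E) : compression he (z * w) = compression he z * compression he w := by
  ext v
  simp only [mul_apply_eq_comp, compression_apply]
  rw [← mul_apply_eq_comp z e, hz]

/-- Gelfand–Mazur in a corner: take `c` in the (nonempty) spectrum of the compression of `x`. -/
theorem exists_eq_smul_of_corner_isUnit [CompleteSpace E] (he : IsIdempotentElem e)
    (he0 : e ≠ 0) {x : E →L[ℂ] E} (hx : x * e = x)
    (hinv : ∀ c : ℂ, x ≠ c • e → ∃ y, y * e = y ∧ (x - c • e) * y = e ∧ y * (x - c • e) = e) :
    ∃ c : ℂ, x = c • e := by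
  obtain ⟨ξ, hξ⟩ : ∃ ξ, e ξ ≠ 0 := by
    by_contra! h
    exact he0 (ContinuousLinearMap.ext h)
  have : Nontrivial (1 - e).ker :=
    ⟨⟨⟨e ξ, mem_ker_one_sub_iff.mpr (by rw [← mul_apply_eq_comp, he.eq])⟩, 0,
      fun h => hξ (congrArg Subtype.val h)⟩⟩
  obtain ⟨c, hc⟩ := spectrum.nonempty (compression he x)
  refine ⟨c, by_contra fun hxc => ?_⟩
  obtain ⟨y, hye, hxy, hyx⟩ := hinv c hxc
  have hxce : (x - c • e) * e = x - c • e := by rw [sub_mul, hx, smul_mul_assoc, he.eq]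
  have hunit : IsUnit (compression he (x - c • e)) :=
    ⟨⟨_, compression he y, by rw [← compression_mul he hxce, hxy, compression_self],
      by rw [← compression_mul he hye, hyx, compression_self]⟩, rfl⟩
  have hsub : algebraMap ℂ _ c - compression he x = -compression he (x - c • e) := by
    rw [map_sub, map_smul, compression_self, neg_sub, Algebra.algebraMap_eq_smul_one]
  exact spectrum.mem_iff.mp hc (hsub ▸ hunit.neg)

theorem IsIdempotentElem.mul_eq_right_iff_apply_mem_range (he : IsIdempotentElem e)
    {p : E →L[ℂ] E} : e * p = p ↔ ∀ ξ, p ξ ∈ Set.range e := by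
  refine ⟨fun h ξ => ⟨p ξ, by rw [← mul_apply_eq_comp, h]⟩, fun h => ?_⟩
  ext ξ
  obtain ⟨η, hη⟩ := h ξ
  rw [mul_apply_eq_comp, ← hη, ← mul_apply_eq_comp, he.eq]

theorem mul_eq_right_iff_apply_eq_self_of_mem_range {p : E →L[ℂ] E} :
    p * e = e ↔ ∀ ξ ∈ Set.range e, p ξ = ξ := by
  refine ⟨?_, fun h => ContinuousLinearMap.ext fun ξ => h (e ξ) ⟨ξ, rfl⟩⟩
  rintro h _ ⟨ξ, rfl⟩
  rw [← mul_apply_eq_comp, h]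

end Corner

section

variable {H : Type*} [NormedAddCommGroup H] [InnerProductSpace ℂ H] {A J : Set (H →L[ℂ] H)}

def IsSemiprime (A : Set (H →L[ℂ] H)) : Prop :=
  ∀ J : Set (H →L[ℂ] H), IsClosedIdealOf A J → (∀ j ∈ J, ∀ j' ∈ J, j * j' = 0) → J = {0}

def IsMinimalRightIdealOf (A J : Set (H →L[ℂ] H)) : Prop :=
  IsRightIdealOf A J ∧ J ≠ {0} ∧
    ∀ K : Set (H →L[ℂ] H), IsRightIdealOf A K → K ⊆ J → K = {0} ∨ K = J

def mulLeftSet (x : H →L[ℂ] H) (S : Set (H →L[ℂ] H)) : Set (H →L[ℂ] H) :=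
  {y | ∃ s ∈ S, y = x * s}

def cornerSet (e : H →L[ℂ] H) (A : Set (H →L[ℂ] H)) : Set (H →L[ℂ] H) :=
  {y | ∃ a ∈ A, y = e * a * e}

namespace IsClosedSubalgebraSet

theorem zero_mem (hA : IsClosedSubalgebraSet A) : (0 : H →L[ℂ] H) ∈ A := hA.2.1

theorem add_mem (hA : IsClosedSubalgebraSet A) {x y : H →L[ℂ] H} (hx : x ∈ A) (hy : y ∈ A) :
    x + y ∈ A := hA.2.2.1 x hx y hy

theorem smul_mem (hA : IsClosedSubalgebraSet A) (c : ℂ) {x : H →L[ℂ] H} (hx : x ∈ A) :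
    c • x ∈ A := hA.2.2.2.1 c x hx

theorem mul_mem (hA : IsClosedSubalgebraSet A) {x y : H →L[ℂ] H} (hx : x ∈ A) (hy : y ∈ A) :
    x * y ∈ A := hA.2.2.2.2 x hx y hy

theorem sub_mem (hA : IsClosedSubalgebraSet A) {x y : H →L[ℂ] H} (hx : x ∈ A) (hy : y ∈ A) :
    x - y ∈ A := by
  simpa [sub_eq_add_neg] using hA.add_mem hx (hA.smul_mem (-1) hy)

theorem isRightIdealOf_self (hA : IsClosedSubalgebraSet A) : IsRightIdealOf A A :=
  ⟨subset_rfl, hA.2.1, hA.2.2.1, hA.2.2.2.1, hA.2.2.2.2⟩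

end IsClosedSubalgebraSet

namespace IsRightIdealOf

theorem subset (hJ : IsRightIdealOf A J) : J ⊆ A := hJ.1

theorem zero_mem (hJ : IsRightIdealOf A J) : (0 : H →L[ℂ] H) ∈ J := hJ.2.1

theorem add_mem (hJ : IsRightIdealOf A J) {x y : H →L[ℂ] H} (hx : x ∈ J) (hy : y ∈ J) :
    x + y ∈ J := hJ.2.2.1 x hx y hy

theorem smul_mem (hJ : IsRightIdealOf A J) (c : ℂ) {x : H →L[ℂ] H} (hx : x ∈ J) :
    c • x ∈ J := hJ.2.2.2.1 c x hx

theorem mul_mem (hJ : IsRightIdealOf A J) {j a : H →L[ℂ] H} (hj : j ∈ J) (ha : a ∈ A) :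
    j * a ∈ J := hJ.2.2.2.2 j hj a ha

theorem sub_mem (hJ : IsRightIdealOf A J) {x y : H →L[ℂ] H} (hx : x ∈ J) (hy : y ∈ J) :
    x - y ∈ J := by
  simpa [sub_eq_add_neg] using hJ.add_mem hx (hJ.smul_mem (-1) hy)

theorem exists_ne_zero (hJ : IsRightIdealOf A J) (hJ0 : J ≠ {0}) : ∃ j ∈ J, j ≠ 0 :=
  ((Set.nontrivial_iff_ne_singleton hJ.zero_mem).mpr hJ0).exists_ne 0

theorem mulLeftSet_subset (hJ : IsRightIdealOf A J) {x : H →L[ℂ] H} (hx : x ∈ J)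
    {S : Set (H →L[ℂ] H)} (hS : S ⊆ A) : mulLeftSet x S ⊆ J := by
  rintro _ ⟨s, hs, rfl⟩
  exact hJ.mul_mem hx (hS hs)

theorem mulLeftSet (hJ : IsRightIdealOf A J) (hA : IsClosedSubalgebraSet A) {x : H →L[ℂ] H}
    (hx : x ∈ A) : IsRightIdealOf A (mulLeftSet x J) := by
  refine ⟨?_, ⟨0, hJ.zero_mem, (mul_zero x).symm⟩, ?_, ?_, ?_⟩
  · rintro _ ⟨j, hj, rfl⟩
    exact hA.mul_mem hx (hJ.subset hj)
  · rintro _ ⟨j, hj, rfl⟩ _ ⟨j', hj', rfl⟩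
    exact ⟨j + j', hJ.add_mem hj hj', (mul_add x j j').symm⟩
  · rintro c _ ⟨j, hj, rfl⟩
    exact ⟨c • j, hJ.smul_mem c hj, (mul_smul_comm c x j).symm⟩
  · rintro _ ⟨j, hj, rfl⟩ a ha
    exact ⟨j * a, hJ.mul_mem hj ha, (mul_assoc x j a).symm⟩

theorem sep_mul_eq_zero (hJ : IsRightIdealOf A J) (x : H →L[ℂ] H) :
    IsRightIdealOf A {y ∈ J | x * y = 0} := by
  refine ⟨fun y hy => hJ.subset hy.1, ⟨hJ.zero_mem, mul_zero x⟩, fun y hy z hz => ?_,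
    fun c y hy => ?_, fun y hy a ha => ?_⟩
  · exact ⟨hJ.add_mem hy.1 hz.1, by rw [mul_add, hy.2, hz.2, add_zero]⟩
  · exact ⟨hJ.smul_mem c hy.1, by rw [mul_smul_comm, hy.2, smul_zero]⟩
  · exact ⟨hJ.mul_mem hy.1 ha, by rw [← mul_assoc, hy.2, zero_mul]⟩

end IsRightIdealOf

theorem mulLeftSet_subset_mulLeftSet_iff (hA : IsClosedSubalgebraSet A) {e p : H →L[ℂ] H}
    (hpA : p ∈ A) (hp : IsIdempotentElem p) (he : IsIdempotentElem e) :
    mulLeftSet p A ⊆ mulLeftSet e A ↔ e * p = p := by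
  refine ⟨fun h => ?_, fun hep => ?_⟩
  · obtain ⟨a, -, hpa⟩ := h ⟨p, hpA, hp.eq.symm⟩
    rw [hpa, ← mul_assoc, he.eq]
  · rintro _ ⟨a, ha, rfl⟩
    exact ⟨p * a, hA.mul_mem hpA ha, by rw [← mul_assoc, hep]⟩

namespace IsSemiprime

/-- `L = {x ∈ A | x k = 0, x A k = 0}` is a closed ideal containing `k`, and so is
`J = {x ∈ L | L x = 0}`, which squares to zero. -/
theorem eq_zero_of_mul_self_eq_zero_of_forall_mul_mul_eq_zero (hsp : IsSemiprime A)
    (hA : IsClosedSubalgebraSet A) {k : H →L[ℂ] H} (hk : k ∈ A) (hkk : k * k = 0)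
    (hkAk : ∀ a ∈ A, k * a * k = 0) : k = 0 := by
  set L : Set (H →L[ℂ] H) := {x | x ∈ A ∧ x * k = 0 ∧ ∀ a ∈ A, x * a * k = 0}
  set J : Set (H →L[ℂ] H) := {x | x ∈ L ∧ ∀ y ∈ L, y * x = 0}
  have hL_mul_right : ∀ x ∈ L, ∀ a ∈ A, x * a ∈ L := fun x ⟨hxA, _, hx⟩ a ha =>
    ⟨hA.mul_mem hxA ha, hx a ha, fun b hb => by rw [mul_assoc x]; exact hx _ (hA.mul_mem ha hb)⟩
  have hL_mul_left : ∀ x ∈ L, ∀ a ∈ A, a * x ∈ L := fun x ⟨hxA, hxk, hx⟩ a ha =>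
    ⟨hA.mul_mem ha hxA, by rw [mul_assoc, hxk, mul_zero],
      fun b hb => by rw [mul_assoc a, mul_assoc a, hx b hb, mul_zero]⟩
  have hJ_closed : IsClosed J := by
    have hJ_eq : J = A ∩ {x | x * k = 0} ∩ (⋂ a ∈ A, {x | x * a * k = 0}) ∩
        ⋂ y ∈ L, {x | y * x = 0} := by
      ext x
      simp only [J, L, Set.mem_ofPred_eq, Set.mem_inter_iff, Set.mem_iInter]
      tauto
    rw [hJ_eq]
    refine ((hA.1.inter ?_).inter (isClosed_biInter fun a _ => ?_)).inter
      (isClosed_biInter fun y _ => ?_) <;>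
    exact isClosed_eq (by fun_prop) continuous_const
  have hJ : IsClosedIdealOf A J := by
    refine ⟨fun x hx => hx.1.1, hJ_closed, ⟨⟨hA.zero_mem, by simp, by simp⟩, by simp⟩, ?_, ?_, ?_⟩
    · rintro x ⟨⟨hxA, hxk, hx⟩, hxL⟩ x' ⟨⟨hx'A, hx'k, hx'⟩, hx'L⟩
      refine ⟨⟨hA.add_mem hxA hx'A, by simp [add_mul, hxk, hx'k], fun a ha => ?_⟩,
        fun y hy => ?_⟩
      · simp [add_mul, hx a ha, hx' a ha]
      · simp [mul_add, hxL y hy, hx'L y hy]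
    · rintro c x ⟨⟨hxA, hxk, hx⟩, hxL⟩
      exact ⟨⟨hA.smul_mem c hxA, by simp [hxk], fun a ha => by simp [hx a ha]⟩,
        fun y hy => by simp [hxL y hy]⟩
    · rintro x ⟨hxL, hx⟩ a ha
      refine ⟨⟨hL_mul_right x hxL a ha, fun y hy => by rw [← mul_assoc, hx y hy, zero_mul]⟩,
        ⟨hL_mul_left x hxL a ha, fun y hy => ?_⟩⟩
      rw [← mul_assoc]
      exact hx _ (hL_mul_right y hy a ha)
  have hkJ : k ∈ J := ⟨⟨hk, hkk, hkAk⟩, fun y hy => hy.2.1⟩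
  simpa [hsp J hJ fun x hx x' hx' => hx'.2 x hx.1] using hkJ

theorem eq_zero_of_forall_mul_eq_zero (hsp : IsSemiprime A) (hA : IsClosedSubalgebraSet A)
    {x : H →L[ℂ] H} (hx : x ∈ A) (h : ∀ a ∈ A, x * a = 0) : x = 0 :=
  hsp.eq_zero_of_mul_self_eq_zero_of_forall_mul_mul_eq_zero hA hx (h x hx) fun a ha => by
    rw [h a ha, zero_mul]

theorem exists_mul_ne_zero (hsp : IsSemiprime A) (hA : IsClosedSubalgebraSet A)
    (hJ : IsRightIdealOf A J) (hJ0 : J ≠ {0}) : ∃ j ∈ J, ∃ j' ∈ J, j * j' ≠ 0 := by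
  by_contra! h
  obtain ⟨j, hj, hj0⟩ := hJ.exists_ne_zero hJ0
  exact hj0 (hsp.eq_zero_of_mul_self_eq_zero_of_forall_mul_mul_eq_zero hA (hJ.subset hj)
    (h j hj j hj) fun a ha => h _ (hJ.mul_mem hj ha) j hj)

end IsSemiprime

/-- A nonzero `k = e b` in a right ideal `K ⊆ eA` has `k a e ≠ 0` for some `a ∈ A` by
semiprimeness, and `k a e ∈ eAe = ℂe` then puts `e` in `K`. -/
theorem isMinimalRightIdealOf_mulLeftSet (hA : IsClosedSubalgebraSet A) (hsp : IsSemiprime A)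
    {e : H →L[ℂ] H} (heA : e ∈ A) (he : IsIdempotentElem e) (he0 : e ≠ 0)
    (hcorner : cornerSet e A = {y | ∃ c : ℂ, y = c • e}) :
    IsMinimalRightIdealOf A (mulLeftSet e A) := by
  have heJ : e ∈ mulLeftSet e A := ⟨e, heA, he.eq.symm⟩
  refine ⟨hA.isRightIdealOf_self.mulLeftSet hA heA, fun h => he0 (by simpa [h] using heJ),
    fun K hK hKJ => or_iff_not_imp_left.mpr fun hK0 => ?_⟩
  obtain ⟨k, hkK, hk0⟩ := hK.exists_ne_zero hK0
  obtain ⟨b, hb, rfl⟩ := hKJ hkK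
  obtain ⟨a, ha, hkae⟩ : ∃ a ∈ A, e * b * a * e ≠ 0 := by
    by_contra! h
    have hbe : e * b * e = 0 := by simpa [mul_assoc, he.eq] using h e heA
    have hkk : e * b * (e * b) = 0 := by rw [← mul_assoc, hbe, zero_mul]
    refine hk0 (hsp.eq_zero_of_mul_self_eq_zero_of_forall_mul_mul_eq_zero hA (hA.mul_mem heA hb)
      hkk fun a ha => ?_)
    rw [← mul_assoc, h a ha, zero_mul]
  obtain ⟨c, hc⟩ : e * b * a * e ∈ {y | ∃ c : ℂ, y = c • e} :=
    hcorner ▸ ⟨b * a, hA.mul_mem hb ha, by simp only [mul_assoc]⟩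
  have hc0 : c ≠ 0 := by
    rintro rfl
    exact hkae (by simpa using hc)
  have heK : e ∈ K := by
    have hk_mul : e * b * (c⁻¹ • (a * e)) = e := by
      rw [mul_smul_comm, ← mul_assoc, hc, smul_smul, inv_mul_cancel₀ hc0, one_smul]
    exact hk_mul ▸ hK.mul_mem hkK (hA.smul_mem _ (hA.mul_mem ha heA))
  exact hKJ.antisymm (hK.mulLeftSet_subset heK subset_rfl)

namespace IsMinimalRightIdealOf

theorem eq_of_mem {K : Set (H →L[ℂ] H)} (hJ : IsMinimalRightIdealOf A J)
    (hK : IsRightIdealOf A K) (hKJ : K ⊆ J) {x : H →L[ℂ] H} (hx : x ∈ K) (hx0 : x ≠ 0) : K = J :=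
  (hJ.2.2 K hK hKJ).resolve_left fun h => hx0 (by simpa [h] using hx)

/-- Semiprimeness gives `j j' ≠ 0` in `J`; then `jJ = J` yields `j = j e` with `e ∈ J`, and
`e² - e` lies in the right ideal `{x ∈ J | j x = 0}`, which is `{0}` because it misses `e`. -/
theorem exists_idempotent_eq_mulLeftSet (hJ : IsMinimalRightIdealOf A J)
    (hA : IsClosedSubalgebraSet A) (hsp : IsSemiprime A) :
    ∃ e ∈ A, IsIdempotentElem e ∧ J = mulLeftSet e A := by
  have hJr := hJ.1
  obtain ⟨j, hj, j', hj', hjj'⟩ := hsp.exists_mul_ne_zero hA hJr hJ.2.1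
  have hj0 : j ≠ 0 := by
    rintro rfl
    exact hjj' (zero_mul j')
  obtain ⟨e, heJ, hje⟩ : j ∈ mulLeftSet j J := by
    rwa [hJ.eq_of_mem (hJr.mulLeftSet hA (hJr.subset hj)) (hJr.mulLeftSet_subset hj hJr.subset)
      ⟨j', hj', rfl⟩ hjj']
  have heA := hJr.subset heJ
  have hker : {x ∈ J | j * x = 0} = {0} :=
    (hJ.2.2 _ (hJr.sep_mul_eq_zero j) fun x hx => hx.1).resolve_right fun h =>
      hj0 (by rw [hje, (h.ge heJ).2])
  have he : IsIdempotentElem e := by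
    have hmem : e * e - e ∈ {x ∈ J | j * x = 0} :=
      ⟨hJr.sub_mem (hJr.mul_mem heJ heA) heJ,
        by rw [mul_sub, ← mul_assoc, ← hje, ← hje, sub_self]⟩
    rw [hker] at hmem
    exact sub_eq_zero.mp hmem
  have he0 : e ≠ 0 := by
    rintro rfl
    exact hj0 (by rw [hje, mul_zero])
  exact ⟨e, heA, he, (hJ.eq_of_mem (hA.isRightIdealOf_self.mulLeftSet hA heA)
    (hJr.mulLeftSet_subset heJ subset_rfl) ⟨e, heA, he.eq.symm⟩ he0).symm⟩

variable {e : H →L[ℂ] H}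

theorem ne_zero (hJ : IsMinimalRightIdealOf A (mulLeftSet e A)) : e ≠ 0 := by
  obtain ⟨_, ⟨a, -, rfl⟩, hea⟩ := hJ.1.exists_ne_zero hJ.2.1
  exact fun he0 => hea (by rw [he0, zero_mul])

/-- `xA` is a nonzero right ideal inside the minimal `eA`, so it contains `e`. -/
theorem exists_corner_right_inverse (hJ : IsMinimalRightIdealOf A (mulLeftSet e A))
    (hA : IsClosedSubalgebraSet A) (hsp : IsSemiprime A) (heA : e ∈ A) (he : IsIdempotentElem e)
    {x : H →L[ℂ] H} (hxA : x ∈ A) (hex : e * x = x) (hxe : x * e = x) (hx0 : x ≠ 0) :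
    ∃ y ∈ A, e * y = y ∧ y * e = y ∧ x * y = e := by
  have hxJ : mulLeftSet x A ⊆ mulLeftSet e A := by
    rintro _ ⟨a, ha, rfl⟩
    exact ⟨x * a, hA.mul_mem hxA ha, by rw [← mul_assoc, hex]⟩
  obtain ⟨a, ha, hxa⟩ : ∃ a ∈ A, x * a ≠ 0 := by
    by_contra! h
    exact hx0 (hsp.eq_zero_of_forall_mul_eq_zero hA hxA h)
  obtain ⟨b, hb, hxb⟩ : e ∈ mulLeftSet x A := by
    rw [hJ.eq_of_mem (hA.isRightIdealOf_self.mulLeftSet hA hxA) hxJ ⟨a, ha, rfl⟩ hxa]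
    exact ⟨e, heA, he.eq.symm⟩
  refine ⟨e * b * e, hA.mul_mem (hA.mul_mem heA hb) heA,
    by rw [← mul_assoc, ← mul_assoc, he.eq], by rw [mul_assoc, he.eq], ?_⟩
  rw [← mul_assoc, ← mul_assoc, hxe, ← hxb, he.eq]

theorem exists_corner_inverse (hJ : IsMinimalRightIdealOf A (mulLeftSet e A))
    (hA : IsClosedSubalgebraSet A) (hsp : IsSemiprime A) (heA : e ∈ A) (he : IsIdempotentElem e)
    {x : H →L[ℂ] H} (hxA : x ∈ A) (hex : e * x = x) (hxe : x * e = x) (hx0 : x ≠ 0) :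
    ∃ y, y * e = y ∧ x * y = e ∧ y * x = e := by
  obtain ⟨y, hyA, hey, hye, hxy⟩ := hJ.exists_corner_right_inverse hA hsp heA he hxA hex hxe hx0
  have hy0 : y ≠ 0 := by
    rintro rfl
    exact hJ.ne_zero (by rw [← hxy, mul_zero])
  obtain ⟨w, -, hew, -, hyw⟩ := hJ.exists_corner_right_inverse hA hsp heA he hyA hey hye hy0
  have hxw : x = w := by
    calc x = x * (y * w) := by rw [hyw, hxe]
      _ = w := by rw [← mul_assoc, hxy, hew]
  exact ⟨y, hye, hxy, hxw ▸ hyw⟩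

theorem cornerSet_eq [CompleteSpace H] (hJ : IsMinimalRightIdealOf A (mulLeftSet e A))
    (hA : IsClosedSubalgebraSet A) (hsp : IsSemiprime A) (heA : e ∈ A) (he : IsIdempotentElem e) :
    cornerSet e A = {y | ∃ c : ℂ, y = c • e} := by
  ext x
  constructor
  · rintro ⟨a, ha, rfl⟩
    refine exists_eq_smul_of_corner_isUnit he hJ.ne_zero (by rw [mul_assoc, he.eq])
      fun c hc => hJ.exists_corner_inverse hA hsp heA he
        (hA.sub_mem (hA.mul_mem (hA.mul_mem heA ha) heA) (hA.smul_mem c heA)) ?_ ?_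
        (sub_ne_zero.mpr hc)
    · rw [mul_sub, ← mul_assoc, ← mul_assoc, he.eq, mul_smul_comm, he.eq]
    · rw [sub_mul, mul_assoc, he.eq, smul_mul_assoc, he.eq]
  · rintro ⟨c, rfl⟩
    exact ⟨c • e, hA.smul_mem c heA, by rw [mul_smul_comm, smul_mul_assoc, he.eq, he.eq]⟩

end IsMinimalRightIdealOf

end

theorem minimal_right_ideals_projection_iff_range_projections_general
    (A : Set (H →L[ℂ] H)) (hA : IsClosedSubalgebraSet A)
    (hsemiprime : ∀ J : Set (H →L[ℂ] H), IsClosedIdealOf A J →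
      (∀ j ∈ J, ∀ j' ∈ J, j * j' = 0) → J = {0}) :
    ((∀ J : Set (H →L[ℂ] H), IsRightIdealOf A J → J ≠ {0} →
        (∀ K : Set (H →L[ℂ] H), IsRightIdealOf A K → K ⊆ J → K = {0} ∨ K = J) →
        ∃ p ∈ A, IsSelfAdjoint p ∧ p * p = p ∧ J = {y | ∃ a ∈ A, y = p * a}) ↔
      (∀ e ∈ A, e * e = e →
        ({y | ∃ a ∈ A, y = e * a * e} = {y | ∃ c : ℂ, y = c • e}) →
        ∃ p ∈ A, IsSelfAdjoint p ∧
          (∀ ξ : H, p ξ ∈ Set.range e) ∧ (∀ ξ ∈ Set.range e, p ξ = ξ))) := by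
  constructor
  · intro hmin e heA (he : IsIdempotentElem e) hcorner
    rcases eq_or_ne e 0 with rfl | he0
    · exact ⟨0, hA.zero_mem, .zero _, fun _ => ⟨0, rfl⟩, fun ξ ⟨η, hη⟩ => by rw [← hη]; rfl⟩
    obtain ⟨hJ, hJ0, hJmin⟩ := isMinimalRightIdealOf_mulLeftSet hA hsemiprime heA he he0 hcorner
    obtain ⟨p, hpA, hp, hpp, hJp⟩ := hmin _ hJ hJ0 hJmin
    have hep := (mulLeftSet_subset_mulLeftSet_iff hA hpA hpp he).mp hJp.ge
    have hpe := (mulLeftSet_subset_mulLeftSet_iff hA heA he hpp).mp hJp.le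
    exact ⟨p, hpA, hp, he.mul_eq_right_iff_apply_mem_range.mp hep,
      mul_eq_right_iff_apply_eq_self_of_mem_range.mp hpe⟩
  · intro hproj J hJr hJ0 hJmin
    have hJ : IsMinimalRightIdealOf A J := ⟨hJr, hJ0, hJmin⟩
    obtain ⟨e, heA, he, rfl⟩ := hJ.exists_idempotent_eq_mulLeftSet hA hsemiprime
    obtain ⟨p, hpA, hp, hrange, hfix⟩ := hproj e heA he (hJ.cornerSet_eq hA hsemiprime heA he)
    have hep := he.mul_eq_right_iff_apply_mem_range.mpr hrange
    have hpe := mul_eq_right_iff_apply_eq_self_of_mem_range.mpr hfix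
    have hpp : IsIdempotentElem p := by
      calc p * p = p * e * p := by rw [mul_assoc, hep]
        _ = p := by rw [hpe, hep]
    exact ⟨p, hpA, hp, hpp, ((mulLeftSet_subset_mulLeftSet_iff hA heA he hpp).mpr hpe).antisymm
      ((mulLeftSet_subset_mulLeftSet_iff hA hpA hpp he).mpr hep)⟩

/-- For a semiprime approximately unital operator algebra `A`: every minimal right ideal of
`A` is of the form `pA` for a self-adjoint projection `p ∈ A` iff every algebraically
minimal idempotent of `A` has its range projection in `A`. -/
theorem minimal_right_ideals_projection_iff_range_projections
    (A : Set (H →L[ℂ] H)) (hA : IsClosedSubalgebraSet A)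
    (hsemiprime : ∀ J : Set (H →L[ℂ] H), IsClosedIdealOf A J →
      (∀ j ∈ J, ∀ j' ∈ J, j * j' = 0) → J = {0})
    (hcai : HasCai A) :
    ((∀ J : Set (H →L[ℂ] H), IsRightIdealOf A J → J ≠ {0} →
        (∀ K : Set (H →L[ℂ] H), IsRightIdealOf A K → K ⊆ J → K = {0} ∨ K = J) →
        ∃ p ∈ A, IsSelfAdjoint p ∧ p * p = p ∧ J = {y | ∃ a ∈ A, y = p * a}) ↔
      (∀ e ∈ A, e * e = e →
        ({y | ∃ a ∈ A, y = e * a * e} = {y | ∃ c : ℂ, y = c • e}) →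
        ∃ p ∈ A, IsSelfAdjoint p ∧
          (∀ ξ : H, p ξ ∈ Set.range e) ∧ (∀ ξ ∈ Set.range e, p ξ = ξ))) :=
  minimal_right_ideals_projection_iff_range_projections_general A hA hsemiprime
end
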